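/- Write e_i^{λ_0} := v_i(D_0), where D_0 is the antinef closure of ⌊−K⌋. Then the rational number lct := min_{1≤i≤s} (k_i + 1 + e_i^{λ_0})/e_i satisfies: D_c = D_0 for every rational c with 0 ≤ c < lct and D_{lct} ≠ D_0; that is, lct is the smallest jumping number (the log-canonical threshold of 𝔞). -/

import Mathlib

open scoped BigOperators

/-- Intersection `D · E i` of an integral divisor `D` with the `i`-th component. -/
def interZ {s : ℕ} (N : Matrix (Fin s) (Fin s) ℤ) (D : Fin s → ℤ) (i : Fin s) : ℤ :=
  ∑ j, D j * N j i

/-- An integral divisor is antinef if it intersects every exceptional component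
nonpositively. -/
def Antinef {s : ℕ} (r : ℕ) (N : Matrix (Fin s) (Fin s) ℤ) (D : Fin s → ℤ) : Prop :=
  ∀ i : Fin s, (i : ℕ) < r → interZ N D i ≤ 0

/-- `Dt` is the antinef closure of the rational divisor `D`: the least integral antinef
divisor lying entrywise above `D`. -/
def IsAntinefClosure {s : ℕ} (r : ℕ) (N : Matrix (Fin s) (Fin s) ℤ)
    (D : Fin s → ℚ) (Dt : Fin s → ℤ) : Prop :=
  Antinef r N Dt ∧ (∀ i, D i ≤ (Dt i : ℚ)) ∧
    ∀ D' : Fin s → ℤ, Antinef r N D' → (∀ i, D i ≤ (D' i : ℚ)) → ∀ i, Dt i ≤ D' i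

/-!
For `c < lct` each `c e_i − k_i` stays below `e_i^{λ₀} + 1`, so `⌊cF − K⌋ ≤ D₀` and the closure
`D_c` lies below the antinef divisor `D₀`; for `c ≥ 0` also `⌊−K⌋ ≤ ⌊cF − K⌋`, so `D₀ ≤ D_c` by
monotonicity of the closure. At `c = lct` a minimising index `i` has `lct e_i − k_i = e_i^{λ₀} + 1`
exactly, which forces `v_i(D_{lct}) > e_i^{λ₀}`.
-/

namespace IsAntinefClosure

variable {s r : ℕ} {N : Matrix (Fin s) (Fin s) ℤ} {D D' : Fin s → ℚ} {Dt Dt' : Fin s → ℤ}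

theorem le_of_antinef (h : IsAntinefClosure r N D Dt) {E : Fin s → ℤ} (hE : Antinef r N E)
    (hle : ∀ i, D i ≤ (E i : ℚ)) : Dt ≤ E :=
  h.2.2 E hE hle

theorem mono (h : IsAntinefClosure r N D Dt) (h' : IsAntinefClosure r N D' Dt')
    (hle : ∀ i, D i ≤ D' i) : Dt ≤ Dt' :=
  h.le_of_antinef h'.1 fun i => (hle i).trans (h'.2.1 i)

end IsAntinefClosure

theorem floor_mul_sub_le_of_lt_div {c f k : ℚ} {d : ℤ} (hf : 0 < f)
    (hc : c < (k + 1 + d) / f) : ⌊c * f - k⌋ ≤ d := by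
  rw [lt_div_iff₀ hf] at hc
  rw [Int.floor_le_iff]
  linarith

theorem floor_mul_sub_eq_of_eq_div {c f k : ℚ} {d : ℤ} (hf : f ≠ 0)
    (hc : c = (k + 1 + d) / f) : ⌊c * f - k⌋ = d + 1 := by
  rw [hc, div_mul_cancel₀ _ hf, show k + 1 + (d : ℚ) - k = ((d + 1 : ℤ) : ℚ) by push_cast; ring,
    Int.floor_intCast]

theorem log_canonical_threshold_general
    (s r : ℕ)
    (N : Matrix (Fin s) (Fin s) ℤ)
    (F : Fin s → ℤ) (hF1 : ∀ i, 1 ≤ F i)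
    (K : Fin s → ℚ)
    (D0 : Fin s → ℤ)
    (hD0 : IsAntinefClosure r N (fun i => (⌊-K i⌋ : ℚ)) D0)
    (lct : ℚ)
    (hlct_le : ∀ i, lct ≤ (K i + 1 + (D0 i : ℚ)) / (F i : ℚ))
    (hlct_mem : ∃ i, lct = (K i + 1 + (D0 i : ℚ)) / (F i : ℚ)) :
    (∀ c : ℚ, 0 ≤ c → c < lct →
      ∀ Dc : Fin s → ℤ,
        IsAntinefClosure r N (fun i => (⌊c * (F i : ℚ) - K i⌋ : ℚ)) Dc → Dc = D0) ∧
    (∀ Dlct : Fin s → ℤ,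
      IsAntinefClosure r N (fun i => (⌊lct * (F i : ℚ) - K i⌋ : ℚ)) Dlct → Dlct ≠ D0) := by
  have hFpos : ∀ i, (0 : ℚ) < F i := fun i => by exact_mod_cast (hF1 i).trans_lt' one_pos
  refine ⟨fun c hc0 hclt Dc hDc => le_antisymm ?_ ?_, ?_⟩
  · refine hDc.le_of_antinef hD0.1 fun i => ?_
    exact_mod_cast floor_mul_sub_le_of_lt_div (hFpos i) (hclt.trans_le (hlct_le i))
  · refine hD0.mono hDc fun i => ?_
    exact_mod_cast Int.floor_mono (by linarith [mul_nonneg hc0 (hFpos i).le])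
  · rintro Dlct hDlct rfl
    obtain ⟨i, hi⟩ := hlct_mem
    have hge : ((⌊lct * F i - K i⌋ : ℤ) : ℚ) ≤ Dlct i := hDlct.2.1 i
    rw [floor_mul_sub_eq_of_eq_div (hFpos i).ne' hi] at hge
    push_cast at hge
    linarith

/-- With `D₀` the antinef closure of `⌊−K⌋`, the rational number
`lct = min_i (k_i + 1 + e_i^{λ₀}) / e_i` is the log-canonical threshold:
`D_c = D₀` for every `0 ≤ c < lct` and `D_{lct} ≠ D₀`. -/
theorem log_canonical_threshold
    (s r : ℕ) (hr : 1 ≤ r) (hrs : r ≤ s)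
    (N : Matrix (Fin s) (Fin s) ℤ)
    (hsym : ∀ i j, N i j = N j i)
    (hoff : ∀ i j : Fin s, i ≠ j → 0 ≤ N i j)
    (hneg : ∀ x : Fin s → ℚ, (∀ i : Fin s, r ≤ (i : ℕ) → x i = 0) → x ≠ 0 →
      (∑ i, ∑ j, x i * x j * (N i j : ℚ)) < 0)
    (F : Fin s → ℤ) (hF1 : ∀ i, 1 ≤ F i) (hFanti : Antinef r N F)
    (K : Fin s → ℚ) (hKaff : ∀ i : Fin s, r ≤ (i : ℕ) → K i = 0)
    (hKexc : ∀ i : Fin s, (i : ℕ) < r →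
      (∑ j, K j * (N j i : ℚ)) + (N i i : ℚ) = -2)
    (D0 : Fin s → ℤ)
    (hD0 : IsAntinefClosure r N (fun i => (⌊-K i⌋ : ℚ)) D0)
    (lct : ℚ)
    (hlct_le : ∀ i, lct ≤ (K i + 1 + (D0 i : ℚ)) / (F i : ℚ))
    (hlct_mem : ∃ i, lct = (K i + 1 + (D0 i : ℚ)) / (F i : ℚ)) :
    (∀ c : ℚ, 0 ≤ c → c < lct →
      ∀ Dc : Fin s → ℤ,
        IsAntinefClosure r N (fun i => (⌊c * (F i : ℚ) - K i⌋ : ℚ)) Dc → Dc = D0) ∧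
    (∀ Dlct : Fin s → ℤ,
      IsAntinefClosure r N (fun i => (⌊lct * (F i : ℚ) - K i⌋ : ℚ)) Dlct → Dlct ≠ D0) :=
  log_canonical_threshold_general s r N F hF1 K D0 hD0 lct hlct_le hlct_mem
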